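/- Let d ≥ 2, 0 < p ≤ 1, and let ρ_m = p|φ_d⟩⟨φ_d| + ((1−p)/d) I_d, where |φ_d⟩ = (1/√d) Σ_{i=0}^{d−1} |i⟩. Then for every λ ≥ 0 and every d×d diagonal density matrix δ, one has ‖ρ_m − λδ‖_tr ≥ ‖ p|φ_d⟩⟨φ_d| + ((1−p−λ)/d) I_d ‖_tr = |p + (1−p−λ)/d| + (d−1)|(1−p−λ)/d| ≥ p. -/

import Mathlib

open Matrix
open scoped ComplexOrder

/-- The trace norm of a matrix `A`: `‖A‖_tr = Tr √(AᴴA)`. -/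
noncomputable def traceNorm {d : ℕ} (A : Matrix (Fin d) (Fin d) ℂ) : ℝ :=
  (((Matrix.posSemidef_conjTranspose_mul_self A).1.eigenvectorUnitary : Matrix (Fin d) (Fin d) ℂ) *
    Matrix.diagonal (((↑) : ℝ → ℂ) ∘ Real.sqrt ∘ (Matrix.posSemidef_conjTranspose_mul_self A).1.eigenvalues) *
    (star (Matrix.posSemidef_conjTranspose_mul_self A).1.eigenvectorUnitary : Matrix (Fin d) (Fin d) ℂ)).trace.re

/-- The maximally coherent state `|φ_d⟩ = (1/√d) Σ_i |i⟩`. -/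
noncomputable def phi (d : ℕ) : Fin d → ℂ :=
  fun _ => ((Real.sqrt d : ℂ))⁻¹

/-- The maximally coherent mixed state `ρ_m = p|φ_d⟩⟨φ_d| + ((1−p)/d) I_d`. -/
noncomputable def mcms (d : ℕ) (p : ℝ) : Matrix (Fin d) (Fin d) ℂ :=
  p • Matrix.vecMulVec (phi d) (star (phi d)) + ((1 - p) / d : ℝ) • 1

/-!
Write `P = |φ_d⟩⟨φ_d|` and `c = (1 - p - λ) / d`. The middle matrix is
`M = (p + c) P + c (1 - P)`, whose absolute value `√(MᴴM)` is `|p + c| P + |c| (1 - P)`; this gives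
the trace-norm formula, and the final inequality is the triangle inequality. Moreover
`ρ_m - λδ = M + D` with `D = λ (I / d - δ)`, and because `δ` is diagonal of trace one and `P` has
constant diagonal `1 / d`, `Tr D = Tr (P D) = 0`. The unitary `Q = sign (p + c) P + sign c (1 - P)`
therefore gives `‖M‖_tr = Re Tr (Q M) = Re Tr (Q (M + D)) ≤ ‖M + D‖_tr`, the last step being the
bound `Re Tr (Q A) ≤ ‖A‖_tr`, which for Hermitian `A` follows by diagonalising `A`.
-/

open scoped MatrixOrder

lemma le_abs_add_add_mul_abs {k : ℝ} (hk : 1 ≤ k) (p c : ℝ) : p ≤ |p + c| + k * |c| := by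
  have h := abs_sub (p + c) c
  rw [add_sub_cancel_right] at h
  nlinarith [le_abs_self p, abs_nonneg c]

lemma exists_mul_self_eq_one_and_mul_eq_abs (a : ℝ) : ∃ s : ℝ, s * s = 1 ∧ s * a = |a| := by
  rcases le_total 0 a with ha | ha
  · exact ⟨1, by norm_num, by rw [one_mul, abs_of_nonneg ha]⟩
  · exact ⟨-1, by norm_num, by rw [neg_one_mul, abs_of_nonpos ha]⟩

namespace Matrix

variable {n : Type*} [DecidableEq n]

section projLinComb

/-- For a projection `P`, the matrix acting as `a` on the range of `P` and as `b` on its kernel. -/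
noncomputable def projLinComb (P : Matrix n n ℂ) (a b : ℝ) : Matrix n n ℂ :=
  a • P + b • (1 - P)

lemma smul_add_smul_one_eq_projLinComb (P : Matrix n n ℂ) (a b : ℝ) :
    a • P + b • 1 = projLinComb P (a + b) b := by
  rw [projLinComb]
  module

variable [Fintype n] {P : Matrix n n ℂ}

lemma projLinComb_mul (hP : IsStarProjection P) (a b a' b' : ℝ) :
    projLinComb P a b * projLinComb P a' b' = projLinComb P (a * a') (b * b') := by
  simp only [projLinComb, add_mul, mul_add, smul_mul_smul_comm, hP.isIdempotentElem.eq,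
    hP.isIdempotentElem.one_sub.eq, hP.mul_one_sub_self, hP.one_sub_mul_self, smul_zero]
  module

lemma star_projLinComb (hP : IsStarProjection P) (a b : ℝ) :
    star (projLinComb P a b) = projLinComb P a b := by
  simp [projLinComb, star_add, star_smul, hP.isSelfAdjoint.star_eq]

lemma projLinComb_nonneg (hP : IsStarProjection P) {a b : ℝ} (ha : 0 ≤ a) (hb : 0 ≤ b) :
    0 ≤ projLinComb P a b := by
  have h : projLinComb P a b = star (projLinComb P √a √b) * projLinComb P √a √b := by
    rw [star_projLinComb hP, projLinComb_mul hP, Real.mul_self_sqrt ha, Real.mul_self_sqrt hb]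
  exact h ▸ star_mul_self_nonneg _

lemma cfcAbs_projLinComb (hP : IsStarProjection P) (a b : ℝ) :
    CFC.abs (projLinComb P a b) = projLinComb P |a| |b| := by
  rw [CFC.abs, CFC.sqrt_eq_iff _ _ (star_mul_self_nonneg _)
    (projLinComb_nonneg hP (abs_nonneg a) (abs_nonneg b)), star_projLinComb hP,
    projLinComb_mul hP, projLinComb_mul hP, abs_mul_abs_self, abs_mul_abs_self]

lemma projLinComb_mem_unitaryGroup (hP : IsStarProjection P) {a b : ℝ} (ha : a * a = 1)
    (hb : b * b = 1) : projLinComb P a b ∈ unitaryGroup n ℂ := by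
  rw [mem_unitaryGroup_iff', star_projLinComb hP, projLinComb_mul hP, ha, hb]
  simp [projLinComb]

lemma trace_projLinComb_mul (P D : Matrix n n ℂ) (a b : ℝ) :
    (projLinComb P a b * D).trace = a * (P * D).trace + b * (D.trace - (P * D).trace) := by
  simp [projLinComb, add_mul, sub_mul, trace_add, trace_sub, trace_smul]

end projLinComb

variable [Fintype n]

lemma IsHermitian.trace_cfc {A : Matrix n n ℂ} (hA : A.IsHermitian) (f : ℝ → ℝ) :
    (cfc f A).trace = ∑ i, (f (hA.eigenvalues i) : ℂ) := by
  rw [hA.cfc_eq, IsHermitian.cfc, Unitary.conjStarAlgAut_apply, trace_mul_cycle]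
  simp

lemma IsHermitian.trace_mul_eq_sum {A : Matrix n n ℂ} (hA : A.IsHermitian) (Q : Matrix n n ℂ) :
    (Q * A).trace = ∑ i, (star (hA.eigenvectorUnitary : Matrix n n ℂ) * Q *
      hA.eigenvectorUnitary) i i * hA.eigenvalues i := by
  conv_lhs => rw [hA.spectral_theorem, Unitary.conjStarAlgAut_apply, ← mul_assoc, ← mul_assoc,
    trace_mul_cycle, ← mul_assoc]
  simp [trace, mul_diagonal]

variable {d : ℕ}

lemma traceNorm_eq_re_trace_abs (A : Matrix (Fin d) (Fin d) ℂ) :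
    traceNorm A = (CFC.abs A).trace.re := by
  have hA := posSemidef_conjTranspose_mul_self A
  rw [CFC.abs, CFC.sqrt_eq_cfc, star_eq_conjTranspose, cfc_nnreal_eq_real _ _ hA.nonneg,
    hA.1.cfc_eq, traceNorm, IsHermitian.cfc, Unitary.conjStarAlgAut_apply]
  simp [Function.comp_def, hA.eigenvalues_nonneg]

lemma IsHermitian.traceNorm_eq_sum_abs_eigenvalues {A : Matrix (Fin d) (Fin d) ℂ}
    (hA : A.IsHermitian) : traceNorm A = ∑ i, |hA.eigenvalues i| := by
  rw [traceNorm_eq_re_trace_abs, CFC.abs_eq_cfc_norm A hA.isSelfAdjoint, hA.trace_cfc]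
  simp

lemma IsHermitian.re_trace_mul_le_traceNorm {A Q : Matrix (Fin d) (Fin d) ℂ}
    (hA : A.IsHermitian) (hQ : Q ∈ unitaryGroup (Fin d) ℂ) :
    (Q * A).trace.re ≤ traceNorm A := by
  set U : Matrix (Fin d) (Fin d) ℂ := ↑hA.eigenvectorUnitary
  have hW : star U * Q * U ∈ unitaryGroup (Fin d) ℂ :=
    Submonoid.mul_mem _ (Submonoid.mul_mem _ (Unitary.star_mem hA.eigenvectorUnitary.2) hQ)
      hA.eigenvectorUnitary.2
  rw [hA.trace_mul_eq_sum, hA.traceNorm_eq_sum_abs_eigenvalues, Complex.re_sum]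
  gcongr with i
  have hWii : |((star U * Q * U) i i).re| ≤ 1 :=
    (Complex.abs_re_le_norm _).trans (entry_norm_bound_of_unitary hW i i)
  calc ((star U * Q * U) i i * hA.eigenvalues i).re
      = ((star U * Q * U) i i).re * hA.eigenvalues i := by simp
    _ ≤ |((star U * Q * U) i i).re| * |hA.eigenvalues i| := by
        rw [← abs_mul]
        exact le_abs_self _
    _ ≤ |hA.eigenvalues i| := mul_le_of_le_one_left (abs_nonneg _) hWii

lemma traceNorm_projLinComb {P : Matrix (Fin d) (Fin d) ℂ} (hP : IsStarProjection P)
    (a b : ℝ) :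
    traceNorm (projLinComb P a b) = |a| * P.trace.re + |b| * (d - P.trace.re) := by
  rw [traceNorm_eq_re_trace_abs, cfcAbs_projLinComb hP, ← mul_one (projLinComb P _ _),
    trace_projLinComb_mul]
  simp

lemma traceNorm_projLinComb_le_traceNorm_add {P : Matrix (Fin d) (Fin d) ℂ}
    (hP : IsStarProjection P) (a b : ℝ) {D : Matrix (Fin d) (Fin d) ℂ} (hD : D.IsHermitian)
    (htrD : D.trace = 0) (htrPD : (P * D).trace = 0) :
    traceNorm (projLinComb P a b) ≤ traceNorm (projLinComb P a b + D) := by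
  obtain ⟨s, hss, hsa⟩ := exists_mul_self_eq_one_and_mul_eq_abs a
  obtain ⟨t, htt, htb⟩ := exists_mul_self_eq_one_and_mul_eq_abs b
  -- `Q = s P + t (1 - P)` satisfies `Q M = |M|` and `Tr (Q D) = 0`
  have hQ := projLinComb_mem_unitaryGroup hP hss htt
  have hM : (projLinComb P a b).IsHermitian := star_projLinComb hP a b
  calc traceNorm (projLinComb P a b)
      = (projLinComb P s t * (projLinComb P a b + D)).trace.re := by
        rw [mul_add, trace_add, trace_projLinComb_mul P D, htrD, htrPD, projLinComb_mul hP, hsa,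
          htb, traceNorm_eq_re_trace_abs, cfcAbs_projLinComb hP]
        simp
    _ ≤ traceNorm (projLinComb P a b + D) := (hM.add hD).re_trace_mul_le_traceNorm hQ

lemma phi_mul_star_phi (i j : Fin d) : phi d i * star (phi d j) = (d : ℂ)⁻¹ := by
  simp only [phi, star_inv₀, Complex.star_def, Complex.conj_ofReal, ← mul_inv,
    ← Complex.ofReal_mul, Real.mul_self_sqrt (Nat.cast_nonneg d), Complex.ofReal_natCast]

lemma isStarProjection_vecMulVec_phi (hd : d ≠ 0) :
    IsStarProjection (vecMulVec (phi d) (star (phi d))) := by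
  refine ⟨?_, ?_⟩
  · have h : star (phi d) ⬝ᵥ phi d = 1 := by
      simp only [dotProduct, Pi.star_apply, mul_comm (star _), phi_mul_star_phi]
      simp [hd]
    rw [IsIdempotentElem, vecMulVec_mul_vecMulVec, h, one_smul]
  · rw [IsSelfAdjoint, star_eq_conjTranspose, conjTranspose_vecMulVec, star_star]

lemma trace_vecMulVec_phi_mul_of_isDiag {δ : Matrix (Fin d) (Fin d) ℂ}
    (hδ : δ.IsDiag) : (vecMulVec (phi d) (star (phi d)) * δ).trace = δ.trace / d := by
  conv_lhs => rw [← hδ.diagonal_diag]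
  simp only [trace, diag, mul_diagonal, vecMulVec_apply, Pi.star_apply, phi_mul_star_phi,
    div_eq_inv_mul, Finset.mul_sum]

lemma trace_vecMulVec_phi (hd : d ≠ 0) : (vecMulVec (phi d) (star (phi d))).trace = 1 := by
  simpa [hd] using trace_vecMulVec_phi_mul_of_isDiag (isDiag_one (n := Fin d) (α := ℂ))

lemma trace_inv_smul_one_sub {δ : Matrix (Fin d) (Fin d) ℂ} (hd : d ≠ 0) (hδtr : δ.trace = 1) :
    ((d : ℝ)⁻¹ • 1 - δ).trace = 0 := by
  simp [trace_smul, hδtr, hd]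

lemma trace_vecMulVec_phi_mul_inv_smul_one_sub {δ : Matrix (Fin d) (Fin d) ℂ} (hd : d ≠ 0)
    (hδtr : δ.trace = 1) (hδdiag : δ.IsDiag) :
    (vecMulVec (phi d) (star (phi d)) * ((d : ℝ)⁻¹ • 1 - δ)).trace = 0 := by
  rw [mul_sub, mul_smul_comm, mul_one, trace_sub, trace_smul, trace_vecMulVec_phi hd,
    trace_vecMulVec_phi_mul_of_isDiag hδdiag, hδtr]
  simp

end Matrix

lemma mcms_sub_smul_eq (d : ℕ) (p l : ℝ) (δ : Matrix (Fin d) (Fin d) ℂ) :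
    mcms d p - l • δ = p • vecMulVec (phi d) (star (phi d)) + ((1 - p - l) / d : ℝ) • 1
      + l • ((d : ℝ)⁻¹ • 1 - δ) := by
  have h : (1 - p) / d = (1 - p - l) / d + l * (d : ℝ)⁻¹ := by ring
  rw [mcms, h]
  module

theorem traceNorm_mcms_sub_smul_diag_ge_general {d : ℕ} (hd : 2 ≤ d) (p : ℝ)
    (l : ℝ)
    (δ : Matrix (Fin d) (Fin d) ℂ)
    (hδ : δ.PosSemidef) (hδtr : δ.trace = 1) (hδdiag : δ.IsDiag) :
    traceNorm (mcms d p - l • δ)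
        ≥ traceNorm (p • Matrix.vecMulVec (phi d) (star (phi d))
            + ((1 - p - l) / d : ℝ) • 1) ∧
    traceNorm (p • Matrix.vecMulVec (phi d) (star (phi d))
            + ((1 - p - l) / d : ℝ) • 1)
        = |p + (1 - p - l) / d| + (d - 1) * |(1 - p - l) / d| ∧
    |p + (1 - p - l) / d| + (d - 1) * |(1 - p - l) / d| ≥ p := by
  have hd0 : d ≠ 0 := by omega
  have hd1 : (1 : ℝ) ≤ d - 1 := by
    have : (2 : ℝ) ≤ d := by exact_mod_cast hd
    linarith
  have hP := isStarProjection_vecMulVec_phi hd0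
  set c := (1 - p - l) / d
  have hnorm : traceNorm (projLinComb (vecMulVec (phi d) (star (phi d))) (p + c) c)
      = |p + c| + (d - 1) * |c| := by
    rw [traceNorm_projLinComb hP, trace_vecMulVec_phi hd0, Complex.one_re]
    ring
  have hD : (l • ((d : ℝ)⁻¹ • 1 - δ)).IsHermitian :=
    ((isHermitian_one.smul (.all _)).sub hδ.isHermitian).smul (.all _)
  have htrD : (l • ((d : ℝ)⁻¹ • 1 - δ)).trace = 0 := by
    rw [trace_smul, trace_inv_smul_one_sub hd0 hδtr, smul_zero]
  have htrPD : (vecMulVec (phi d) (star (phi d)) * l • ((d : ℝ)⁻¹ • 1 - δ)).trace = 0 := by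
    rw [mul_smul_comm, trace_smul, trace_vecMulVec_phi_mul_inv_smul_one_sub hd0 hδtr hδdiag,
      smul_zero]
  rw [mcms_sub_smul_eq, smul_add_smul_one_eq_projLinComb, hnorm]
  refine ⟨?_, rfl, le_abs_add_add_mul_abs hd1 p c⟩
  exact hnorm ▸ traceNorm_projLinComb_le_traceNorm_add hP _ _ hD htrD htrPD

/-- For every `λ ≥ 0` and every diagonal density matrix `δ`,
`‖ρ_m − λδ‖_tr ≥ ‖p|φ_d⟩⟨φ_d| + ((1−p−λ)/d) I_d‖_tr = |p + (1−p−λ)/d| + (d−1)|(1−p−λ)/d| ≥ p`. -/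
theorem traceNorm_mcms_sub_smul_diag_ge {d : ℕ} (hd : 2 ≤ d) (p : ℝ)
    (hp0 : 0 < p) (hp1 : p ≤ 1) (l : ℝ) (hl : 0 ≤ l)
    (δ : Matrix (Fin d) (Fin d) ℂ)
    (hδ : δ.PosSemidef) (hδtr : δ.trace = 1) (hδdiag : δ.IsDiag) :
    traceNorm (mcms d p - l • δ)
        ≥ traceNorm (p • Matrix.vecMulVec (phi d) (star (phi d))
            + ((1 - p - l) / d : ℝ) • 1) ∧
    traceNorm (p • Matrix.vecMulVec (phi d) (star (phi d))
            + ((1 - p - l) / d : ℝ) • 1)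
        = |p + (1 - p - l) / d| + (d - 1) * |(1 - p - l) / d| ∧
    |p + (1 - p - l) / d| + (d - 1) * |(1 - p - l) / d| ≥ p :=
  traceNorm_mcms_sub_smul_diag_ge_general hd p l δ hδ hδtr hδdiag
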